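/- arXiv:2604.19977 — 2 statements merged into one kernel-verified Lean document; each statement's English description precedes it below -/
import Mathlib

section
/- Under consistency, conditional mean transportability over trial participation (E[Y^{a=2} | X, S=1] = E[Y^{a=2} | X, S=0]), positivity of selection into the external population, conditional mean exchangeability over treatment in the external population, and treatment positivity in the external population, the potential outcome mean E[Y^{a=2} | S=1] equals γ_{0,2} = E[ E[Y | X, S=0, A=2] | S=1 ], where the inner conditional outcome mean is taken in the external data and integrated over the covariate distribution of the index population. -/
open scoped Classical BigOperators
open Finset

noncomputable section

/-- Indicator of a proposition. -/
def ind (P : Prop) : ℝ := if P then 1 else 0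

/-- Expectation with respect to weights `p` on a finite outcome space. -/
def pexp {Ω : Type*} [Fintype Ω] (p : Ω → ℝ) (f : Ω → ℝ) : ℝ := ∑ ω, p ω * f ω

/-- Probability of an event. -/
def prob {Ω : Type*} [Fintype Ω] (p : Ω → ℝ) (B : Ω → Prop) : ℝ :=
  pexp p (fun ω => ind (B ω))

/-- Conditional expectation of `f` given event `B`. -/
def cexp {Ω : Type*} [Fintype Ω] (p : Ω → ℝ) (f : Ω → ℝ) (B : Ω → Prop) : ℝ :=
  pexp p (fun ω => f ω * ind (B ω)) / prob p B

/-- Conditional probability of `B` given `C`. -/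
def cprob {Ω : Type*} [Fintype Ω] (p : Ω → ℝ) (B C : Ω → Prop) : ℝ :=
  prob p (fun ω => B ω ∧ C ω) / prob p C

/-- Conditional outcome mean `g_{s,a}(x) = E[Y | X = x, S = s, A = a]`. -/
def gfun {Ω 𝒳 : Type*} [Fintype Ω] (p : Ω → ℝ) (X : Ω → 𝒳) (S A : Ω → ℕ)
    (Y : Ω → ℝ) (s a : ℕ) (x : 𝒳) : ℝ :=
  cexp p Y (fun ω => X ω = x ∧ S ω = s ∧ A ω = a)

/-- Standardized functional `γ_{s,a} = E[ E[Y | X, S=s, A=a] | S=1 ]`. -/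
def gam {Ω 𝒳 : Type*} [Fintype Ω] (p : Ω → ℝ) (X : Ω → 𝒳) (S A : Ω → ℕ)
    (Y : Ω → ℝ) (s a : ℕ) : ℝ :=
  cexp p (fun ω => gfun p X S A Y s a (X ω)) (fun ω => S ω = 1)

/-- Participation probability `p_s(x) = Pr[S = s | X = x]`. -/
def psel {Ω 𝒳 : Type*} [Fintype Ω] (p : Ω → ℝ) (X : Ω → 𝒳) (S : Ω → ℕ)
    (s : ℕ) (x : 𝒳) : ℝ :=
  cprob p (fun ω => S ω = s) (fun ω => X ω = x)

/-- Treatment probability `e_{s,a}(x) = Pr[A = a | X = x, S = s]`. -/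
def etrt {Ω 𝒳 : Type*} [Fintype Ω] (p : Ω → ℝ) (X : Ω → 𝒳) (S A : Ω → ℕ)
    (s a : ℕ) (x : 𝒳) : ℝ :=
  cprob p (fun ω => A ω = a) (fun ω => X ω = x ∧ S ω = s)

/-- Weight `w_{s,a}(X,S,A) = I(S=s, A=a) p_1(X) / (e_{s,a}(X) p_s(X))`. -/
def wgt {Ω 𝒳 : Type*} [Fintype Ω] (p : Ω → ℝ) (X : Ω → 𝒳) (S A : Ω → ℕ)
    (s a : ℕ) (ω : Ω) : ℝ :=
  ind (S ω = s ∧ A ω = a) * psel p X S 1 (X ω) /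
    (etrt p X S A s a (X ω) * psel p X S s (X ω))

/-- Influence function `Γ_{s,a}(O)`. -/
def Gam {Ω 𝒳 : Type*} [Fintype Ω] (p : Ω → ℝ) (X : Ω → 𝒳) (S A : Ω → ℕ)
    (Y : Ω → ℝ) (s a : ℕ) (ω : Ω) : ℝ :=
  (1 / prob p (fun ω' => S ω' = 1)) *
    (ind (S ω = 1) * (gfun p X S A Y s a (X ω) - gam p X S A Y s a)
      + wgt p X S A s a ω * (Y ω - gfun p X S A Y s a (X ω)))

/-- Variance of `f` under `p`. -/
def pvar {Ω : Type*} [Fintype Ω] (p : Ω → ℝ) (f : Ω → ℝ) : ℝ :=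
  pexp p (fun ω => (f ω - pexp p f) ^ 2)

/-!
Both sides are `S = 1`-conditional means, so by the tower property over `X` it suffices to
compare them on each stratum `X = x` of positive mass in the index population. There, (A4)
moves the mean of `Y^2` to the external population, whose stratum is non-null by (A5), (A6)
restricts it to `A = 2`, and consistency replaces `Y^2` by `Y`, which gives `g_{0,2}(x)`.
-/

section FiniteProbability

variable {Ω : Type*} [Fintype Ω] {p : Ω → ℝ}

lemma ind_nonneg (P : Prop) : 0 ≤ ind P := by
  unfold ind
  split_ifs <;> norm_num

lemma ind_congr {P Q : Prop} (h : P ↔ Q) : ind P = ind Q := by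
  simp only [ind, h]

lemma prob_nonneg (hp0 : ∀ ω, 0 ≤ p ω) (B : Ω → Prop) : 0 ≤ prob p B :=
  Finset.sum_nonneg fun ω _ => mul_nonneg (hp0 ω) (ind_nonneg _)

lemma prob_congr {B C : Ω → Prop} (h : ∀ ω, B ω ↔ C ω) : prob p B = prob p C := by
  simp only [prob, ind_congr (h _)]

lemma prob_and_pos_of_cprob_pos (hp0 : ∀ ω, 0 ≤ p ω) {B C : Ω → Prop}
    (h : 0 < cprob p B C) : 0 < prob p (fun ω => B ω ∧ C ω) :=
  (prob_nonneg hp0 _).lt_of_ne fun h0 => by simp [cprob, ← h0] at h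

lemma cexp_congr {f g : Ω → ℝ} {B : Ω → Prop} (h : ∀ ω, B ω → f ω = g ω) :
    cexp p f B = cexp p g B := by
  unfold cexp pexp
  congr 1
  refine Finset.sum_congr rfl fun ω _ => ?_
  by_cases hB : B ω
  · simp only [h ω hB]
  · simp [ind, hB]

lemma cexp_const {B : Ω → Prop} (hB : prob p B ≠ 0) (c : ℝ) :
    cexp p (fun _ => c) B = c := by
  have hnum : pexp p (fun ω => c * ind (B ω)) = c * prob p B := by
    simp only [prob, pexp, Finset.mul_sum, mul_left_comm]
  rw [cexp, hnum, mul_div_cancel_right₀ c hB]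

lemma pexp_mul_ind_eq_cexp_mul_prob (hp0 : ∀ ω, 0 ≤ p ω) (f : Ω → ℝ) (B : Ω → Prop) :
    pexp p (fun ω => f ω * ind (B ω)) = cexp p f B * prob p B := by
  by_cases hB : prob p B = 0
  · have hnull : ∀ ω, p ω * ind (B ω) = 0 := fun ω =>
      (Finset.sum_eq_zero_iff_of_nonneg fun ω _ => mul_nonneg (hp0 ω) (ind_nonneg _)).mp hB ω
        (mem_univ ω)
    rw [hB, mul_zero]
    exact Finset.sum_eq_zero fun ω _ => by rw [mul_left_comm, hnull ω, mul_zero]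
  · exact (div_mul_cancel₀ _ hB).symm

variable {𝒳 : Type*}

lemma pexp_mul_ind_eq_sum_fiber (X : Ω → 𝒳) (f : Ω → ℝ) (B : Ω → Prop) :
    pexp p (fun ω => f ω * ind (B ω)) =
      ∑ x ∈ univ.image X, pexp p (fun ω => f ω * ind (X ω = x ∧ B ω)) := by
  unfold pexp
  rw [Finset.sum_comm]
  refine Finset.sum_congr rfl fun ω _ => ?_
  have hsplit : ∀ x, ind (X ω = x ∧ B ω) = if X ω = x then ind (B ω) else 0 := fun x => by
    by_cases hx : X ω = x <;> simp [ind, hx]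
  simp only [hsplit, mul_ite, mul_zero, Finset.sum_ite_eq,
    if_pos (mem_image_of_mem X (mem_univ ω))]

lemma cexp_comp_fiber (X : Ω → 𝒳) (g : 𝒳 → ℝ) {x : 𝒳} {B : Ω → Prop}
    (hx : prob p (fun ω => X ω = x ∧ B ω) ≠ 0) :
    cexp p (fun ω => g (X ω)) (fun ω => X ω = x ∧ B ω) = g x := by
  rw [cexp_congr fun ω hω => congrArg g hω.1, cexp_const hx]

theorem cexp_eq_of_forall_cexp_fiber_eq (hp0 : ∀ ω, 0 ≤ p ω) (X : Ω → 𝒳) {f g : Ω → ℝ}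
    {B : Ω → Prop}
    (h : ∀ x, 0 < prob p (fun ω => X ω = x ∧ B ω) →
      cexp p f (fun ω => X ω = x ∧ B ω) = cexp p g (fun ω => X ω = x ∧ B ω)) :
    cexp p f B = cexp p g B := by
  rw [cexp, cexp, pexp_mul_ind_eq_sum_fiber X f B, pexp_mul_ind_eq_sum_fiber X g B]
  congr 1
  refine Finset.sum_congr rfl fun x _ => ?_
  rw [pexp_mul_ind_eq_cexp_mul_prob hp0, pexp_mul_ind_eq_cexp_mul_prob hp0]
  rcases (prob_nonneg hp0 (fun ω => X ω = x ∧ B ω)).eq_or_lt with h0 | hpos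
  · rw [← h0, mul_zero, mul_zero]
  · rw [h x hpos]

end FiniteProbability

theorem statement1_general
    {Ω 𝒳 : Type*} [Fintype Ω] (p : Ω → ℝ)
    (hp0 : ∀ ω, 0 ≤ p ω)
    (X : Ω → 𝒳) (S A : Ω → ℕ) (Y : Ω → ℝ) (Ypo : ℕ → Ω → ℝ)
    (hcons : ∀ ω a, A ω = a → Ypo a ω = Y ω)
    (hA4 : ∀ x, 0 < prob p (fun ω => X ω = x ∧ S ω = 1) →
      cexp p (Ypo 2) (fun ω => X ω = x ∧ S ω = 1) =
        cexp p (Ypo 2) (fun ω => X ω = x ∧ S ω = 0))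
    (hA5 : ∀ x, 0 < prob p (fun ω => X ω = x ∧ S ω = 1) →
      0 < cprob p (fun ω => S ω = 0) (fun ω => X ω = x))
    (hA6 : ∀ x, 0 < prob p (fun ω => X ω = x ∧ S ω = 0) →
      cexp p (Ypo 2) (fun ω => X ω = x ∧ S ω = 0) =
        cexp p (Ypo 2) (fun ω => X ω = x ∧ S ω = 0 ∧ A ω = 2)) :
    cexp p (Ypo 2) (fun ω => S ω = 1) = gam p X S A Y 0 2 := by
  refine cexp_eq_of_forall_cexp_fiber_eq hp0 X fun x hx1 => ?_
  have hx0 : 0 < prob p (fun ω => X ω = x ∧ S ω = 0) := by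
    rw [prob_congr fun ω => and_comm]
    exact prob_and_pos_of_cprob_pos hp0 (hA5 x hx1)
  calc cexp p (Ypo 2) (fun ω => X ω = x ∧ S ω = 1)
      = cexp p (Ypo 2) (fun ω => X ω = x ∧ S ω = 0 ∧ A ω = 2) := by
        rw [hA4 x hx1, hA6 x hx0]
    _ = gfun p X S A Y 0 2 x := cexp_congr fun ω hω => hcons ω 2 hω.2.2
    _ = cexp p (fun ω => gfun p X S A Y 0 2 (X ω)) (fun ω => X ω = x ∧ S ω = 1) :=
        (cexp_comp_fiber X _ hx1.ne').symm

theorem statement1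
    {Ω 𝒳 : Type*} [Fintype Ω] (p : Ω → ℝ)
    (hp0 : ∀ ω, 0 ≤ p ω) (hp1 : ∑ ω, p ω = 1)
    (X : Ω → 𝒳) (S A : Ω → ℕ) (Y : Ω → ℝ) (Ypo : ℕ → Ω → ℝ)
    (hS : 0 < prob p (fun ω => S ω = 1))
    (hcons : ∀ ω a, A ω = a → Ypo a ω = Y ω)
    (hA4 : ∀ x, 0 < prob p (fun ω => X ω = x ∧ S ω = 1) →
      cexp p (Ypo 2) (fun ω => X ω = x ∧ S ω = 1) =
        cexp p (Ypo 2) (fun ω => X ω = x ∧ S ω = 0))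
    (hA5 : ∀ x, 0 < prob p (fun ω => X ω = x ∧ S ω = 1) →
      0 < cprob p (fun ω => S ω = 0) (fun ω => X ω = x))
    (hA6 : ∀ x, 0 < prob p (fun ω => X ω = x ∧ S ω = 0) →
      cexp p (Ypo 2) (fun ω => X ω = x ∧ S ω = 0) =
        cexp p (Ypo 2) (fun ω => X ω = x ∧ S ω = 0 ∧ A ω = 2))
    (hA7 : ∀ x, 0 < prob p (fun ω => X ω = x ∧ S ω = 0) →
      0 < cprob p (fun ω => A ω = 2) (fun ω => X ω = x ∧ S ω = 0)) :
    cexp p (Ypo 2) (fun ω => S ω = 1) = gam p X S A Y 0 2 :=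
  statement1_general p hp0 X S A Y Ypo hcons hA4 hA5 hA6
end
end

section
/- Variance decomposition and efficiency comparison: under transportability in mean for a=0, the influence function Φ(O) for φ satisfies Φ = Ψ + Δ with E[Ψ·Δ] = 0, hence Var(Φ(O)) − Var(Ψ(O)) = Var(Δ(O)) ≥ 0; in particular the asymptotic variance of the transportability-in-effect-measure estimator is at least that of the transportability-in-mean estimator, with strict inequality whenever Δ(O) is not almost surely zero. -/
open scoped Classical BigOperators
open Finset

noncomputable section

/-! Each `Γ_{s,a}` is centred: its outcome-model part because `γ_{s,a}` is the mean of
`g_{s,a}(X)` on `{S = 1}`, its weighted residual because `g_{s,a}` is the conditional mean of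
`Y` given `(X, S, A)`, so that any function of `X` times `I(S = s, A = a) (Y - g_{s,a}(X))`
has mean zero. Under transportability in mean for `a = 0` the outcome-model parts of `Γ_{1,0}`
and `Γ_{0,0}` cancel, and `Δ` is a difference of weighted residuals supported on the cells
`{S = 1, A = 0}` and `{S = 0, A = 0}`. The terms of `Ψ` live on `{S = 1}`, `{S = 1, A = 1}`
and `{S = 0, A = 2}`, so in `Ψ Δ` only the cell `{S = 1, A = 0}` survives, where `Ψ` is a
function of `X`: hence `E[Ψ Δ] = 0`, and `Φ = Ψ - Δ` with `E Δ = 0` gives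
`Var Φ = Var Ψ + Var Δ`. -/

section FiniteExpectation

variable {Ω : Type*} [Fintype Ω] {p : Ω → ℝ}

lemma pexp_congr {f g : Ω → ℝ} (h : ∀ ω, p ω ≠ 0 → f ω = g ω) :
    pexp p f = pexp p g :=
  Finset.sum_congr rfl fun ω _ => by
    by_cases hp : p ω = 0
    · simp [hp]
    · rw [h ω hp]

lemma pexp_add (f g : Ω → ℝ) :
    pexp p (fun ω => f ω + g ω) = pexp p f + pexp p g := by
  simp only [pexp, mul_add, Finset.sum_add_distrib]

lemma pexp_sub (f g : Ω → ℝ) :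
    pexp p (fun ω => f ω - g ω) = pexp p f - pexp p g := by
  simp only [pexp, mul_sub, Finset.sum_sub_distrib]

lemma pexp_const_mul (c : ℝ) (f : Ω → ℝ) :
    pexp p (fun ω => c * f ω) = c * pexp p f := by
  simp only [pexp, Finset.mul_sum, mul_left_comm]

lemma pexp_sum {ι : Type*} (s : Finset ι) (f : ι → Ω → ℝ) :
    pexp p (fun ω => ∑ i ∈ s, f i ω) = ∑ i ∈ s, pexp p (f i) := by
  simp only [pexp, Finset.mul_sum]
  exact Finset.sum_comm

lemma prob_pos_of_mem (hp0 : ∀ ω, 0 ≤ p ω) {B : Ω → Prop} {ω : Ω} (hω : p ω ≠ 0)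
    (hB : B ω) : 0 < prob p B :=
  calc 0 < p ω * ind (B ω) := by simpa [ind, hB] using lt_of_le_of_ne (hp0 ω) hω.symm
    _ ≤ prob p B := Finset.single_le_sum (fun ω _ => mul_nonneg (hp0 ω) (ind_nonneg _))
        (Finset.mem_univ ω)

lemma pexp_ind_mul_sub_cexp (hp0 : ∀ ω, 0 ≤ p ω) (f : Ω → ℝ) (B : Ω → Prop) :
    pexp p (fun ω => ind (B ω) * (f ω - cexp p f B)) = 0 := by
  have hsplit : pexp p (fun ω => ind (B ω) * (f ω - cexp p f B)) =
      pexp p (fun ω => f ω * ind (B ω)) - cexp p f B * prob p B := by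
    rw [prob, ← pexp_const_mul, ← pexp_sub]
    exact pexp_congr fun ω _ => by ring
  rw [hsplit, sub_eq_zero]
  by_cases hB : prob p B = 0
  · have hnull : pexp p (fun ω => f ω * ind (B ω)) = pexp p (fun _ => 0) :=
      pexp_congr fun ω hω => by
        have hBω : ¬ B ω := fun hBω => (prob_pos_of_mem hp0 hω hBω).ne' hB
        simp [ind, hBω]
    rw [hnull, hB, mul_zero]
    simp [pexp]
  · exact (div_mul_cancel₀ _ hB).symm

lemma pvar_nonneg (hp0 : ∀ ω, 0 ≤ p ω) (f : Ω → ℝ) : 0 ≤ pvar p f :=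
  Finset.sum_nonneg fun ω _ => mul_nonneg (hp0 ω) (sq_nonneg _)

lemma pvar_pos_of_pexp_eq_zero (hp0 : ∀ ω, 0 ≤ p ω) {f : Ω → ℝ} (hf : pexp p f = 0)
    {ω : Ω} (hω : 0 < p ω) (hfω : f ω ≠ 0) : 0 < pvar p f :=
  calc 0 < p ω * (f ω - pexp p f) ^ 2 := by
        rw [hf, sub_zero]
        exact mul_pos hω (sq_pos_of_ne_zero hfω)
    _ ≤ pvar p f := Finset.single_le_sum (f := fun ω => p ω * (f ω - pexp p f) ^ 2)
        (fun ω _ => mul_nonneg (hp0 ω) (sq_nonneg _))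
        (Finset.mem_univ ω)

lemma pvar_sub_of_pexp_mul_eq_zero {f g : Ω → ℝ} (hg : pexp p g = 0)
    (hfg : pexp p (fun ω => f ω * g ω) = 0) :
    pvar p (fun ω => f ω - g ω) = pvar p f + pvar p g := by
  have hmean : pexp p (fun ω => f ω - g ω) = pexp p f := by rw [pexp_sub, hg, sub_zero]
  calc pvar p (fun ω => f ω - g ω)
      = pexp p (fun ω => (f ω - pexp p f) ^ 2 + (g ω - pexp p g) ^ 2 -
          2 * (f ω * g ω) + 2 * pexp p f * g ω) := by
        unfold pvar
        rw [hmean]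
        exact pexp_congr fun ω _ => by rw [hg]; ring
    _ = pvar p f + pvar p g - 2 * pexp p (fun ω => f ω * g ω) + 2 * pexp p f * pexp p g := by
        rw [pexp_add, pexp_sub, pexp_add, pexp_const_mul, pexp_const_mul, pvar, pvar]
    _ = pvar p f + pvar p g := by rw [hfg, hg]; ring

variable {𝒳 : Type*}

lemma pexp_ind_mul_comp_mul_sub_gfun (hp0 : ∀ ω, 0 ≤ p ω) (X : Ω → 𝒳) (S A : Ω → ℕ)
    (Y : Ω → ℝ) (s a : ℕ) (h : 𝒳 → ℝ) :
    pexp p (fun ω => ind (S ω = s ∧ A ω = a) * h (X ω) *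
      (Y ω - gfun p X S A Y s a (X ω))) = 0 := by
  have hfibre : ∀ ω,
      ind (S ω = s ∧ A ω = a) * h (X ω) * (Y ω - gfun p X S A Y s a (X ω)) =
      ∑ x ∈ Finset.univ.image X,
        h x * (ind (X ω = x ∧ S ω = s ∧ A ω = a) * (Y ω - gfun p X S A Y s a x)) := by
    intro ω
    rw [Finset.sum_eq_single_of_mem (X ω) (Finset.mem_image_of_mem X (Finset.mem_univ ω))]
    · simp only [true_and]
      ring
    · intro x _ hx
      simp [ind, Ne.symm hx]
  rw [funext hfibre, pexp_sum]
  refine Finset.sum_eq_zero fun x _ => ?_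
  rw [pexp_const_mul]
  exact mul_eq_zero_of_right _ (pexp_ind_mul_sub_cexp hp0 Y _)

end FiniteExpectation

section InfluenceFunction

variable {Ω 𝒳 : Type*} [Fintype Ω] {p : Ω → ℝ}
  (X : Ω → 𝒳) (S A : Ω → ℕ) (Y : Ω → ℝ)

lemma pexp_Gam (hp0 : ∀ ω, 0 ≤ p ω) (s a : ℕ) : pexp p (Gam p X S A Y s a) = 0 := by
  have hmodel : pexp p (fun ω => ind (S ω = 1) *
      (gfun p X S A Y s a (X ω) - gam p X S A Y s a)) = 0 :=
    pexp_ind_mul_sub_cexp hp0 _ _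
  have hresidual :
      pexp p (fun ω => wgt p X S A s a ω * (Y ω - gfun p X S A Y s a (X ω))) = 0 := by
    simpa only [wgt, mul_div_assoc] using pexp_ind_mul_comp_mul_sub_gfun hp0 X S A Y s a
      (fun x => psel p X S 1 x / (etrt p X S A s a x * psel p X S s x))
  unfold Gam
  rw [pexp_const_mul, pexp_add, hmodel, hresidual, add_zero, mul_zero]

variable {X S A Y}

lemma gfun_eq_of_transport (hp0 : ∀ ω, 0 ≤ p ω)
    (htrans : ∀ x, 0 < prob p (fun ω => X ω = x ∧ S ω = 1) →
      gfun p X S A Y 1 0 x = gfun p X S A Y 0 0 x)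
    {ω : Ω} (hω : p ω ≠ 0) (hS : S ω = 1) :
    gfun p X S A Y 1 0 (X ω) = gfun p X S A Y 0 0 (X ω) :=
  htrans _ (prob_pos_of_mem hp0 hω ⟨rfl, hS⟩)

lemma gam_eq_of_transport (hp0 : ∀ ω, 0 ≤ p ω)
    (htrans : ∀ x, 0 < prob p (fun ω => X ω = x ∧ S ω = 1) →
      gfun p X S A Y 1 0 x = gfun p X S A Y 0 0 x) :
    gam p X S A Y 1 0 = gam p X S A Y 0 0 := by
  unfold gam cexp
  congr 1
  refine pexp_congr fun ω hω => ?_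
  by_cases hS : S ω = 1
  · dsimp only
    rw [gfun_eq_of_transport hp0 htrans hω hS]
  · simp [ind, hS]

lemma Gam_sub_Gam_of_transport (hp0 : ∀ ω, 0 ≤ p ω)
    (htrans : ∀ x, 0 < prob p (fun ω => X ω = x ∧ S ω = 1) →
      gfun p X S A Y 1 0 x = gfun p X S A Y 0 0 x)
    {ω : Ω} (hω : p ω ≠ 0) :
    Gam p X S A Y 1 0 ω - Gam p X S A Y 0 0 ω = (1 / prob p (fun ω' => S ω' = 1)) *
      (wgt p X S A 1 0 ω * (Y ω - gfun p X S A Y 1 0 (X ω)) -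
        wgt p X S A 0 0 ω * (Y ω - gfun p X S A Y 0 0 (X ω))) := by
  have hmodel : ind (S ω = 1) * (gfun p X S A Y 1 0 (X ω) - gam p X S A Y 1 0) =
      ind (S ω = 1) * (gfun p X S A Y 0 0 (X ω) - gam p X S A Y 0 0) := by
    by_cases hS : S ω = 1
    · rw [gfun_eq_of_transport hp0 htrans hω hS, gam_eq_of_transport hp0 htrans]
    · simp [ind, hS]
  rw [Gam, Gam, hmodel]
  ring

lemma exists_Gam_sub_mul_Gam_sub_eq (hp0 : ∀ ω, 0 ≤ p ω)
    (htrans : ∀ x, 0 < prob p (fun ω => X ω = x ∧ S ω = 1) →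
      gfun p X S A Y 1 0 x = gfun p X S A Y 0 0 x) :
    ∃ h : 𝒳 → ℝ, ∀ ω, p ω ≠ 0 →
      (Gam p X S A Y 1 1 ω - Gam p X S A Y 0 2 ω) *
          (Gam p X S A Y 1 0 ω - Gam p X S A Y 0 0 ω) =
        ind (S ω = 1 ∧ A ω = 0) * h (X ω) * (Y ω - gfun p X S A Y 1 0 (X ω)) := by
  refine ⟨fun x => (1 / prob p (fun ω' => S ω' = 1)) ^ 2 *
    (gfun p X S A Y 1 1 x - gam p X S A Y 1 1 - gfun p X S A Y 0 2 x + gam p X S A Y 0 2) *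
    (psel p X S 1 x / (etrt p X S A 1 0 x * psel p X S 1 x)), fun ω hω => ?_⟩
  rw [Gam_sub_Gam_of_transport hp0 htrans hω]
  unfold Gam wgt
  rcases eq_or_ne (S ω) 1 with hS | hS <;> rcases eq_or_ne (A ω) 0 with hA | hA
  · simp [ind, hS, hA]
    ring
  all_goals simp [ind, hS, hA]

end InfluenceFunction

theorem statement11_general
    {Ω 𝒳 : Type*} [Fintype Ω] (p : Ω → ℝ)
    (hp0 : ∀ ω, 0 ≤ p ω)
    (X : Ω → 𝒳) (S A : Ω → ℕ) (Y : Ω → ℝ)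
    (htrans : ∀ x, 0 < prob p (fun ω => X ω = x ∧ S ω = 1) →
      gfun p X S A Y 1 0 x = gfun p X S A Y 0 0 x) :
    (∀ ω, (Gam p X S A Y 1 1 ω - Gam p X S A Y 1 0 ω -
        Gam p X S A Y 0 2 ω + Gam p X S A Y 0 0 ω) =
      (Gam p X S A Y 1 1 ω - Gam p X S A Y 0 2 ω) -
        (Gam p X S A Y 1 0 ω - Gam p X S A Y 0 0 ω)) ∧
    pexp p (fun ω =>
      (Gam p X S A Y 1 1 ω - Gam p X S A Y 0 2 ω) *
        (Gam p X S A Y 1 0 ω - Gam p X S A Y 0 0 ω)) = 0 ∧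
    pvar p (fun ω => Gam p X S A Y 1 1 ω - Gam p X S A Y 1 0 ω -
        Gam p X S A Y 0 2 ω + Gam p X S A Y 0 0 ω) -
      pvar p (fun ω => Gam p X S A Y 1 1 ω - Gam p X S A Y 0 2 ω) =
      pvar p (fun ω => Gam p X S A Y 1 0 ω - Gam p X S A Y 0 0 ω) ∧
    0 ≤ pvar p (fun ω => Gam p X S A Y 1 0 ω - Gam p X S A Y 0 0 ω) ∧
    ((∃ ω, 0 < p ω ∧ Gam p X S A Y 1 0 ω - Gam p X S A Y 0 0 ω ≠ 0) →
      pvar p (fun ω => Gam p X S A Y 1 1 ω - Gam p X S A Y 0 2 ω) <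
        pvar p (fun ω => Gam p X S A Y 1 1 ω - Gam p X S A Y 1 0 ω -
          Gam p X S A Y 0 2 ω + Gam p X S A Y 0 0 ω)) := by
  have hΦ : ∀ ω, (Gam p X S A Y 1 1 ω - Gam p X S A Y 1 0 ω -
      Gam p X S A Y 0 2 ω + Gam p X S A Y 0 0 ω) =
      (Gam p X S A Y 1 1 ω - Gam p X S A Y 0 2 ω) -
        (Gam p X S A Y 1 0 ω - Gam p X S A Y 0 0 ω) := fun ω => by ring
  have hΔ : pexp p (fun ω => Gam p X S A Y 1 0 ω - Gam p X S A Y 0 0 ω) = 0 := by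
    rw [pexp_sub, pexp_Gam X S A Y hp0, pexp_Gam X S A Y hp0, sub_zero]
  have horth : pexp p (fun ω => (Gam p X S A Y 1 1 ω - Gam p X S A Y 0 2 ω) *
      (Gam p X S A Y 1 0 ω - Gam p X S A Y 0 0 ω)) = 0 := by
    obtain ⟨h, hΨΔ⟩ := exists_Gam_sub_mul_Gam_sub_eq hp0 htrans
    rw [pexp_congr hΨΔ]
    exact pexp_ind_mul_comp_mul_sub_gfun hp0 X S A Y 1 0 h
  have hvar := pvar_sub_of_pexp_mul_eq_zero hΔ horth
  rw [← funext hΦ] at hvar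
  refine ⟨hΦ, horth, by linarith, pvar_nonneg hp0 _, ?_⟩
  rintro ⟨ω, hω, hΔω⟩
  linarith [pvar_pos_of_pexp_eq_zero hp0 hΔ hω hΔω]

theorem statement11
    {Ω 𝒳 : Type*} [Fintype Ω] (p : Ω → ℝ)
    (hp0 : ∀ ω, 0 ≤ p ω) (hp1 : ∑ ω, p ω = 1)
    (X : Ω → 𝒳) (S A : Ω → ℕ) (Y : Ω → ℝ)
    (hbin : ∀ ω, S ω = 0 ∨ S ω = 1)
    (hz0 : 0 < prob p (fun ω => S ω = 1)) (hz1 : prob p (fun ω => S ω = 1) < 1)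
    (hposp : ∀ x, 0 < prob p (fun ω => X ω = x) →
      0 < psel p X S 1 x ∧ psel p X S 1 x < 1)
    (hpose : ∀ x, 0 < prob p (fun ω => X ω = x) →
      0 < etrt p X S A 1 1 x ∧ 0 < etrt p X S A 1 0 x ∧
        0 < etrt p X S A 0 2 x ∧ 0 < etrt p X S A 0 0 x)
    (htrans : ∀ x, 0 < prob p (fun ω => X ω = x ∧ S ω = 1) →
      gfun p X S A Y 1 0 x = gfun p X S A Y 0 0 x) :
    (∀ ω, (Gam p X S A Y 1 1 ω - Gam p X S A Y 1 0 ω -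
        Gam p X S A Y 0 2 ω + Gam p X S A Y 0 0 ω) =
      (Gam p X S A Y 1 1 ω - Gam p X S A Y 0 2 ω) -
        (Gam p X S A Y 1 0 ω - Gam p X S A Y 0 0 ω)) ∧
    pexp p (fun ω =>
      (Gam p X S A Y 1 1 ω - Gam p X S A Y 0 2 ω) *
        (Gam p X S A Y 1 0 ω - Gam p X S A Y 0 0 ω)) = 0 ∧
    pvar p (fun ω => Gam p X S A Y 1 1 ω - Gam p X S A Y 1 0 ω -
        Gam p X S A Y 0 2 ω + Gam p X S A Y 0 0 ω) -
      pvar p (fun ω => Gam p X S A Y 1 1 ω - Gam p X S A Y 0 2 ω) =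
      pvar p (fun ω => Gam p X S A Y 1 0 ω - Gam p X S A Y 0 0 ω) ∧
    0 ≤ pvar p (fun ω => Gam p X S A Y 1 0 ω - Gam p X S A Y 0 0 ω) ∧
    ((∃ ω, 0 < p ω ∧ Gam p X S A Y 1 0 ω - Gam p X S A Y 0 0 ω ≠ 0) →
      pvar p (fun ω => Gam p X S A Y 1 1 ω - Gam p X S A Y 0 2 ω) <
        pvar p (fun ω => Gam p X S A Y 1 1 ω - Gam p X S A Y 1 0 ω -
          Gam p X S A Y 0 2 ω + Gam p X S A Y 0 0 ω)) :=
  statement11_general p hp0 X S A Y htrans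
end
end
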